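/- With ρ and Γ from the 0.732 construction, for every y ∈ [1/2, 1] the inequality ∫_{1/2}^y x·ρ(x) dx + ∫_y^1 max(x/2, 1−x)·ρ(x) dx ≥ Γ·y holds. -/

import Mathlib

/-!
On `(c, 1]` one has `x ρ(x) - max(x/2, 1-x) ρ(x) = Γ` identically, while `ρ` vanishes on
`[1/2, c]`; hence the left-hand side equals `∫_{1/2}^1 max(x/2, 1-x) ρ + Γ max(y - c, 0)`.
Integrating piecewise, `∫_{1/2}^1 max(x/2, 1-x) ρ = Γ (c/2 - (log 3 + log (2c-1))/4)`, and the
defining equation of `c`, which reads `log 3 + log (2c-1) = -2c`, makes this `Γ c`. So the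
left-hand side is `Γ max(y, c) ≥ Γ y`.
-/

open MeasureTheory Set intervalIntegral Real

lemma IntervalIntegrable.of_eqOn_Ioo {f g : ℝ → ℝ} {a b : ℝ} (hab : a ≤ b)
    (hfg : EqOn f g (Ioo a b)) (hg : ContinuousOn g (Icc a b)) :
    IntervalIntegrable f volume a b :=
  (intervalIntegrable_congr_uIoo (uIoo_of_le hab ▸ hfg)).mpr (hg.intervalIntegrable_of_Icc hab)

lemma integral_add_integral_eq_integral_add_integral_sub {f g : ℝ → ℝ} {a b y : ℝ}
    (hg₁ : IntervalIntegrable g volume a y) (hg₂ : IntervalIntegrable g volume y b)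
    (hfg : IntervalIntegrable (fun x => f x - g x) volume a y) :
    (∫ x in a..y, f x) + ∫ x in y..b, g x
      = (∫ x in a..b, g x) + ∫ x in a..y, (f x - g x) := by
  have hf : IntervalIntegrable f volume a y := by simpa using hfg.add hg₁
  have hsplit := integral_add_adjacent_intervals hg₁ hg₂
  have hsub := integral_sub hf hg₁
  linarith

lemma integral_one_sub_div_two_mul_sub_one {a b : ℝ} (ha : 1 / 2 < a) (hab : a ≤ b) :
    ∫ x in a..b, (1 - x) / (2 * x - 1)
      = (a - b) / 2 + (log (2 * b - 1) - log (2 * a - 1)) / 4 := by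
  have hne : ∀ x ∈ uIcc a b, 2 * x - 1 ≠ 0 := fun x hx => by
    rw [uIcc_of_le hab] at hx
    linarith [hx.1]
  rw [integral_eq_sub_of_hasDerivAt (f := fun x => -x / 2 + log (2 * x - 1) / 4)]
  · ring
  · intro x hx
    have hlog := (((hasDerivAt_id' x).const_mul 2).sub_const 1).log (hne x hx)
    refine (((hasDerivAt_id' x).neg.div_const 2).add (hlog.div_const 4)).congr_deriv ?_
    field_simp [hne x hx]
    ring
  · exact (ContinuousOn.div (by fun_prop) (by fun_prop) hne).intervalIntegrable

lemma intervalIntegrable_indicator_Ioi_const {a b c G : ℝ} :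
    IntervalIntegrable ((Ioi c).indicator fun _ => G) volume a b :=
  ⟨(integrableOn_const measure_Ioc_lt_top.ne).indicator measurableSet_Ioi,
    (integrableOn_const measure_Ioc_lt_top.ne).indicator measurableSet_Ioi⟩

lemma integral_indicator_Ioi_const {a b c G : ℝ} (hac : a ≤ c) (hab : a ≤ b) :
    ∫ x in a..b, (Ioi c).indicator (fun _ => G) x = G * max (b - c) 0 := by
  rw [integral_of_le hab, MeasureTheory.integral_indicator measurableSet_Ioi,
    Measure.restrict_restrict measurableSet_Ioi, inter_comm, Ioc_inter_Ioi, max_eq_right hac,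
    setIntegral_const, Real.volume_real_Ioc, smul_eq_mul, mul_comm]

section density

/-- The density `ρ` of the 0.732 construction, with a free parameter `G` in place of `Γ`. -/
noncomputable def density (c G x : ℝ) : ℝ :=
  if x ≤ c then 0 else if x ≤ 2 / 3 then G / (2 * x - 1) else 2 * G / x

variable {c G x : ℝ}

lemma max_mul_density_of_le (hx : x ≤ c) : max (x / 2) (1 - x) * density c G x = 0 := by
  simp [density, hx]

lemma max_mul_density_of_lt_of_le (hcx : c < x) (hx : x ≤ 2 / 3) :
    max (x / 2) (1 - x) * density c G x = G * ((1 - x) / (2 * x - 1)) := by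
  rw [density, if_neg hcx.not_ge, if_pos hx, max_eq_right (by linarith)]
  ring

lemma max_mul_density_of_gt (hcx : c < x) (hx : 2 / 3 < x) :
    max (x / 2) (1 - x) * density c G x = G := by
  rw [density, if_neg hcx.not_ge, if_neg hx.not_ge, max_eq_left (by linarith)]
  field_simp

lemma mul_density_sub_max_mul_density (hc : 1 / 2 ≤ c) :
    x * density c G x - max (x / 2) (1 - x) * density c G x = (Ioi c).indicator (fun _ => G) x := by
  by_cases hxc : x ≤ c
  · simp [density, hxc]
  have hcx : c < x := not_le.mp hxc
  rw [indicator_of_mem (mem_Ioi.mpr hcx)]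
  rcases le_or_gt x (2 / 3) with hx | hx
  · rw [max_mul_density_of_lt_of_le hcx hx, density, if_neg hxc, if_pos hx,
      mul_div_assoc', mul_div_assoc', ← sub_div, div_eq_iff (by linarith)]
    ring
  · rw [max_mul_density_of_gt hcx hx, density, if_neg hxc, if_neg hx.not_ge]
    field_simp [show x ≠ 0 by linarith]
    ring

lemma intervalIntegrable_max_mul_density (hc₁ : 1 / 2 < c) (hc₂ : c ≤ 2 / 3) ⦃a b : ℝ⦄
    (ha : 1 / 2 ≤ a) (hab : a ≤ b) (hb : b ≤ 1) :
    IntervalIntegrable (fun x => max (x / 2) (1 - x) * density c G x) volume a b := by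
  have h₁ : IntervalIntegrable (fun x => max (x / 2) (1 - x) * density c G x) volume (1 / 2) c :=
    .of_eqOn_Ioo hc₁.le (g := 0) (fun x hx => max_mul_density_of_le hx.2.le) continuousOn_const
  have h₂ :
      IntervalIntegrable (fun x => max (x / 2) (1 - x) * density c G x) volume c (2 / 3) := by
    refine .of_eqOn_Ioo hc₂ (fun x hx => max_mul_density_of_lt_of_le hx.1 hx.2.le) ?_
    exact continuousOn_const.mul <| (by fun_prop : ContinuousOn (fun x : ℝ => 1 - x) _).div
      (by fun_prop) fun x hx => by linarith [hx.1]
  have h₃ : IntervalIntegrable (fun x => max (x / 2) (1 - x) * density c G x) volume (2 / 3) 1 :=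
    .of_eqOn_Ioo (by norm_num) (fun x hx => max_mul_density_of_gt (by linarith [hx.1]) hx.1)
      continuousOn_const
  refine ((h₁.trans h₂).trans h₃).mono_set ?_
  rw [uIcc_of_le hab, uIcc_of_le (by norm_num)]
  exact Icc_subset_Icc ha hb

lemma integral_max_mul_density (hc₁ : 1 / 2 < c) (hc₂ : c ≤ 2 / 3) :
    ∫ x in (1 / 2 : ℝ)..1, max (x / 2) (1 - x) * density c G x
      = G * (c / 2 - (log 3 + log (2 * c - 1)) / 4) := by
  have hint := intervalIntegrable_max_mul_density (G := G) hc₁ hc₂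
  rw [← integral_add_adjacent_intervals (hint le_rfl hc₁.le (by linarith))
      (hint hc₁.le (by linarith) le_rfl),
    ← integral_add_adjacent_intervals (hint hc₁.le hc₂ (by linarith)) (hint (by norm_num)
      (by norm_num) le_rfl),
    integral_congr_Ioo_of_le hc₁.le (g := fun _ => 0) (fun x hx => max_mul_density_of_le hx.2.le),
    integral_congr_Ioo_of_le hc₂ (fun x hx => max_mul_density_of_lt_of_le hx.1 hx.2.le),
    integral_congr_Ioo_of_le (by norm_num)
      (fun x hx => max_mul_density_of_gt (by linarith [hx.1]) hx.1),
    intervalIntegral.integral_const_mul, integral_one_sub_div_two_mul_sub_one hc₁ hc₂,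
    show (2 : ℝ) * (2 / 3) - 1 = 3⁻¹ by norm_num, log_inv]
  simp only [one_div, intervalIntegral.integral_zero, intervalIntegral.integral_const, smul_eq_mul,
    zero_add]
  ring

end density

/-- with `ρ` and `Γ` from the 0.732 construction
(`ρ(x) = Γ/(2x−1)` for `c < x ≤ 2/3`, `ρ(x) = 2Γ/x` for `2/3 < x ≤ 1`, `0` otherwise,
where `c` solves `1/(6c−3) = e^{2c}` and `Γ = −2/ln((16/27)(2c−1))`), for every
`y ∈ [1/2, 1]`:
`∫_{1/2}^y x·ρ(x) dx + ∫_y^1 max(x/2, 1−x)·ρ(x) dx ≥ Γ·y`. -/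
theorem improved_density_guarantee
    (c : ℝ) (hc1 : 1 / 2 < c) (hc2 : c < 2 / 3)
    (hc : 1 / (6 * c - 3) = Real.exp (2 * c))
    (y : ℝ) (hy1 : 1 / 2 ≤ y) (hy2 : y ≤ 1) :
    (∫ x in (1 / 2 : ℝ)..y, x *
        (if x ≤ c then 0 else if x ≤ 2 / 3 then
          (-2 / Real.log ((16 / 27) * (2 * c - 1))) / (2 * x - 1)
        else 2 * (-2 / Real.log ((16 / 27) * (2 * c - 1))) / x))
      + (∫ x in y..1, max (x / 2) (1 - x) *
        (if x ≤ c then 0 else if x ≤ 2 / 3 then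
          (-2 / Real.log ((16 / 27) * (2 * c - 1))) / (2 * x - 1)
        else 2 * (-2 / Real.log ((16 / 27) * (2 * c - 1))) / x))
      ≥ (-2 / Real.log ((16 / 27) * (2 * c - 1))) * y := by
  set G := -2 / log ((16 / 27) * (2 * c - 1))
  have hG : 0 ≤ G :=
    (div_pos_of_neg_of_neg (by norm_num) (log_neg (by linarith) (by linarith))).le
  have hlog : log 3 + log (2 * c - 1) = -(2 * c) := by
    rw [← log_mul (by norm_num) (by linarith), show (3 : ℝ) * (2 * c - 1) = 6 * c - 3 by ring,
      ← neg_eq_iff_eq_neg, ← log_inv, ← one_div, hc, log_exp]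
  change (∫ x in (1 / 2 : ℝ)..y, x * density c G x)
    + (∫ x in y..1, max (x / 2) (1 - x) * density c G x) ≥ G * y
  have hint := intervalIntegrable_max_mul_density (G := G) hc1 hc2.le
  have hstep : IntervalIntegrable
      (fun x => x * density c G x - max (x / 2) (1 - x) * density c G x) volume (1 / 2) y := by
    simp only [mul_density_sub_max_mul_density hc1.le]
    exact intervalIntegrable_indicator_Ioi_const
  rw [integral_add_integral_eq_integral_add_integral_sub (hint le_rfl hy1 hy2)
    (hint hy1 hy2 le_rfl) hstep]
  simp only [mul_density_sub_max_mul_density hc1.le]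
  rw [integral_max_mul_density hc1 hc2.le, hlog, integral_indicator_Ioi_const hc1.le hy1]
  nlinarith [le_max_left (y - c) 0]
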